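/- With κ the Koopman family of partial isometries of a partial action α (extended by zero to L²(X,ν)), one has the partial-representation identity κ_t κ_s κ_{s⁻¹} = κ_{ts} κ_{s⁻¹} for all s, t ∈ G, and κ_e = id. -/
import Mathlib


open MeasureTheory
open scoped ENNReal

/-- A Borel partial action of a group `G` on a measure space `(X, ν)` with quasi-invariant
measure `ν` and Radon–Nikodym cocycle `σ`. -/
structure BorelPartialAction (G : Type*) [Group G] (X : Type*) [MeasurableSpace X]
    (ν : Measure X) where
  dom : G → Set X
  act : G → X → X
  σ : X → G → ℝ
  dom_meas : ∀ t : G, MeasurableSet (dom t)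
  act_meas : ∀ t : G, Measurable (act t)
  σ_meas : ∀ t : G, Measurable fun x => σ x t
  σ_nonneg : ∀ (x : X) (t : G), 0 ≤ σ x t
  bijOn : ∀ t : G, Set.BijOn (act t) (dom t⁻¹) (dom t)
  rn : ∀ t : G, ∀ E : Set X, MeasurableSet E → E ⊆ dom t⁻¹ →
    ν (act t '' E) = ∫⁻ x in E, ENNReal.ofReal (σ x t) ∂ν
  dom_one : dom 1 = Set.univ
  act_one : ∀ x : X, act 1 x = x
  inv_eq : ∀ t : G, ∀ x ∈ dom t⁻¹, act t⁻¹ (act t x) = x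
  extend : ∀ s t : G, ∀ x ∈ dom t⁻¹, act t x ∈ dom s⁻¹ →
    x ∈ dom (s * t)⁻¹ ∧ act (s * t) x = act s (act t x)
  σ_one : ∀ x : X, σ x 1 = 1
  σ_cocycle : ∀ s t : G, ∀ x : X, x ∈ dom s⁻¹ → x ∈ dom (t * s)⁻¹ →
    σ x (t * s) = σ x s * σ (act s x) t

/-- The Koopman family of the partial action, extended by zero off `dom s`. -/
noncomputable def koopman {G X : Type*} [Group G] [MeasurableSpace X] {ν : Measure X}
    (α : BorelPartialAction G X ν) (s : G) (g : X → ℝ) : X → ℝ :=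
  (α.dom s).indicator fun x => Real.sqrt (α.σ x s⁻¹) * g (α.act s⁻¹ x)


lemma koopman_apply_of_mem {G X : Type*} [Group G] [MeasurableSpace X] {ν : Measure X}
    (α : BorelPartialAction G X ν) (s : G) (g : X → ℝ) {x : X} (hx : x ∈ α.dom s) :
    koopman α s g x = Real.sqrt (α.σ x s⁻¹) * g (α.act s⁻¹ x) :=
  Set.indicator_of_mem hx _

lemma koopman_apply_of_notMem {G X : Type*} [Group G] [MeasurableSpace X] {ν : Measure X}
    (α : BorelPartialAction G X ν) (s : G) (g : X → ℝ) {x : X} (hx : x ∉ α.dom s) :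
    koopman α s g x = 0 :=
  Set.indicator_of_notMem hx _

/-- The Koopman family satisfies the partial-representation identities:
`κ_e = id` and `κ_t κ_s κ_{s⁻¹} = κ_{ts} κ_{s⁻¹}`. -/
theorem koopman_partial_representation {G X : Type*} [Group G] [MeasurableSpace X]
    {ν : Measure X} (α : BorelPartialAction G X ν) :
    (∀ g : X → ℝ, koopman α 1 g = g) ∧
    (∀ (s t : G) (g : X → ℝ),
      koopman α t (koopman α s (koopman α s⁻¹ g)) = koopman α (t * s) (koopman α s⁻¹ g)) := by
  constructor
  · intro g
    funext x
    have hx : x ∈ α.dom 1 := by rw [α.dom_one]; trivial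
    rw [koopman_apply_of_mem α 1 g hx, inv_one, α.σ_one, α.act_one, Real.sqrt_one, one_mul]
  · intro s t g
    set h := koopman α s⁻¹ g with hh
    funext x
    have key : x ∈ α.dom (t * s) → α.act (t * s)⁻¹ x ∈ α.dom s⁻¹ →
        x ∈ α.dom t ∧ α.act t⁻¹ x = α.act s (α.act (t * s)⁻¹ x) := by
      intro hx hy
      have hx' : x ∈ α.dom ((t * s)⁻¹)⁻¹ := by rwa [inv_inv]
      obtain ⟨h1, h2⟩ := α.extend s (t * s)⁻¹ x hx' hy
      have e : s * (t * s)⁻¹ = t⁻¹ := by group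
      rw [e] at h1 h2
      rw [inv_inv] at h1
      exact ⟨h1, h2⟩
    by_cases hxt : x ∈ α.dom t
    · rw [koopman_apply_of_mem α t _ hxt]
      by_cases hus : α.act t⁻¹ x ∈ α.dom s
      · -- main case
        have hxd : x ∈ α.dom ((t⁻¹)⁻¹) := by rwa [inv_inv]
        have hud : α.act t⁻¹ x ∈ α.dom ((s⁻¹)⁻¹) := by rwa [inv_inv]
        obtain ⟨h1, h2⟩ := α.extend s⁻¹ t⁻¹ x hxd hud
        have e : (s⁻¹ * t⁻¹)⁻¹ = t * s := by group
        have e2 : s⁻¹ * t⁻¹ = (t * s)⁻¹ := by group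
        rw [e] at h1
        rw [e2] at h2
        have hcoc := α.σ_cocycle t⁻¹ s⁻¹ x hxd (by rwa [e])
        rw [e2] at hcoc
        rw [koopman_apply_of_mem α (t * s) h h1, koopman_apply_of_mem α s h hus, h2, hcoc,
          Real.sqrt_mul (α.σ_nonneg x t⁻¹)]
        ring
      · rw [koopman_apply_of_notMem α s h hus, mul_zero]
        by_cases hxts : x ∈ α.dom (t * s)
        · rw [koopman_apply_of_mem α (t * s) h hxts]
          by_cases hyd : α.act (t * s)⁻¹ x ∈ α.dom s⁻¹
          · exact absurd ((key hxts hyd).2 ▸ (α.bijOn s).mapsTo hyd) hus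
          · rw [hh, koopman_apply_of_notMem α s⁻¹ g hyd, mul_zero]
        · rw [koopman_apply_of_notMem α (t * s) h hxts]
    · rw [koopman_apply_of_notMem α t _ hxt]
      by_cases hxts : x ∈ α.dom (t * s)
      · rw [koopman_apply_of_mem α (t * s) h hxts]
        by_cases hyd : α.act (t * s)⁻¹ x ∈ α.dom s⁻¹
        · exact absurd (key hxts hyd).1 hxt
        · rw [hh, koopman_apply_of_notMem α s⁻¹ g hyd, mul_zero]
      · rw [koopman_apply_of_notMem α (t * s) h hxts]
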